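/- arXiv:2001.04756 — 5 statements merged into one kernel-verified Lean document; each statement's English description precedes it below -/
import Mathlib

section
/- Let K = [k_min, k_max] ⊆ R, let P denote projection onto K, let k* ∈ K, let s ∈ {-1,0,1}, δ > 0, and k ∈ K. If k' = P(k - δ s), then s*(k - k*) <= ((k - k*)^2 - (k' - k*)^2)/(2δ) + δ/2. -/
theorem projection_step_inequality (kmin kmax : ℝ) (hK : kmin ≤ kmax)
    (kstar : ℝ) (hkstar : kstar ∈ Set.Icc kmin kmax)
    (s : ℝ) (hs : s ∈ ({-1, 0, 1} : Set ℝ))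
    (δ : ℝ) (hδ : 0 < δ)
    (k : ℝ) (hk : k ∈ Set.Icc kmin kmax)
    (k' : ℝ) (hk' : k' = max kmin (min kmax (k - δ * s))) :
    s * (k - kstar) ≤ ((k - kstar) ^ 2 - (k' - kstar) ^ 2) / (2 * δ) + δ / 2 := by
  obtain ⟨h1, h2⟩ := hkstar
  have hs2 : s ^ 2 ≤ 1 := by
    rcases hs with h | h | h <;> simp_all <;> norm_num
  set x := k - δ * s with hx
  have hproj : (k' - kstar) ^ 2 ≤ (x - kstar) ^ 2 := by
    rcases le_total x kmin with h | h
    · have : k' = kmin := by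
        rw [hk', min_eq_right (h.trans hK), max_eq_left h]
      rw [this]; nlinarith
    · rcases le_total kmax x with h' | h'
      · have : k' = kmax := by
          rw [hk', min_eq_left h', max_eq_right hK]
        rw [this]; nlinarith
      · have : k' = x := by
          rw [hk', min_eq_right h', max_eq_right h]
        rw [this]
  have hexp : (x - kstar) ^ 2 = (k - kstar) ^ 2 - 2 * δ * (s * (k - kstar)) + δ ^ 2 * s ^ 2 := by
    rw [hx]; ring
  have h2δ : (0:ℝ) < 2 * δ := by linarith
  rw [div_add' _ _ _ (ne_of_gt h2δ), le_div_iff₀ h2δ]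
  nlinarith
end

section
/- For B > 0, B' > 0, and positive reals M', M'': if B·sqrt(M') + B'·sqrt(M'') < B·sqrt(M' + M'') holds with M'' = M', then it holds for all M'' >= M'. -/
theorem interval_shrink_criterion (B B' M' : ℝ) (hB : 0 < B) (hB' : 0 < B')
    (hM' : 0 < M')
    (h : B * Real.sqrt M' + B' * Real.sqrt M' < B * Real.sqrt (M' + M')) :
    ∀ M'' : ℝ, M' ≤ M'' →
      B * Real.sqrt M' + B' * Real.sqrt M'' < B * Real.sqrt (M' + M'') := by
  intro M'' hle
  have hM''0 : 0 < M'' := lt_of_lt_of_le hM' hle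
  have hs' : 0 < Real.sqrt M' := Real.sqrt_pos.mpr hM'
  have hs'' : 0 < Real.sqrt M'' := Real.sqrt_pos.mpr hM''0
  have hsle : Real.sqrt M' ≤ Real.sqrt M'' := Real.sqrt_le_sqrt hle
  -- from h: B + B' < B * sqrt 2
  have h2 : B + B' < B * Real.sqrt 2 := by
    have heq : Real.sqrt (M' + M') = Real.sqrt 2 * Real.sqrt M' := by
      rw [← Real.sqrt_mul (by norm_num : (0:ℝ) ≤ 2)]
      ring_nf
    rw [heq] at h
    nlinarith [hs']
  have hsq2 : Real.sqrt 2 ^ 2 = 2 := Real.sq_sqrt (by norm_num)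
  have hkey : B'^2 + 2*B*B' < B^2 := by
    nlinarith [h2, hsq2, Real.sqrt_nonneg 2, hB.le, hB'.le]
  have hrhs : 0 ≤ B * Real.sqrt (M' + M'') := by positivity
  refine lt_of_pow_lt_pow_left₀ 2 hrhs ?_
  have e1 : Real.sqrt M' ^ 2 = M' := Real.sq_sqrt hM'.le
  have e2 : Real.sqrt M'' ^ 2 = M'' := Real.sq_sqrt hM''0.le
  have e3 : (B * Real.sqrt (M' + M''))^2 = B^2 * (M' + M'') := by
    rw [mul_pow, Real.sq_sqrt (by linarith)]
  rw [e3]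
  have hp : Real.sqrt M' * Real.sqrt M'' ≤ M'' := by
    calc Real.sqrt M' * Real.sqrt M'' ≤ Real.sqrt M'' * Real.sqrt M'' :=
          mul_le_mul_of_nonneg_right hsle hs''.le
      _ = M'' := Real.mul_self_sqrt hM''0.le
  nlinarith [hkey, hp, e1, e2, mul_pos hB hB', hM''0]
end

section
/- Let f : R -> R be convex and differentiable on interval K with minimizer k* ∈ K and |f'| <= G on K. Let S be a random variable taking values in {-1,0,1} such that H·E[S] = sign(f'(k)) for some constant H >= 1 and a fixed k ∈ K. Then f(k) - f(k*) <= G·H·E[S·(k - k*)]. -/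
open MeasureTheory

theorem noisy_sign_per_round_bound
    {Ω : Type*} [MeasurableSpace Ω] (μ : Measure Ω) [IsProbabilityMeasure μ]
    (K : Set ℝ) (hK : Convex ℝ K)
    (f f' : ℝ → ℝ) (G : ℝ) (hG : 0 < G)
    (hconv : ConvexOn ℝ K f)
    (hderiv : ∀ x ∈ K, HasDerivAt f (f' x) x)
    (hbound : ∀ x ∈ K, |f' x| ≤ G)
    (kstar : ℝ) (hkstar : kstar ∈ K)
    (hmin : ∀ x ∈ K, f kstar ≤ f x)
    (k : ℝ) (hk : k ∈ K)
    (S : Ω → ℝ) (hSmem : ∀ ω, S ω ∈ ({-1, 0, 1} : Set ℝ))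
    (hSint : Integrable S μ)
    (H : ℝ) (hH : 1 ≤ H)
    (hHS : H * ∫ ω, S ω ∂μ = Real.sign (f' k)) :
    f k - f kstar ≤ G * H * ∫ ω, S ω * (k - kstar) ∂μ := by

  have hInt : (∫ ω, S ω * (k - kstar) ∂μ) = (∫ ω, S ω ∂μ) * (k - kstar) := by
    rw [← integral_mul_const]
  rw [hInt]
  have key : G * H * ((∫ ω, S ω ∂μ) * (k - kstar)) = G * (Real.sign (f' k) * (k - kstar)) := by
    rw [← hHS]; ring
  rw [key]
  -- tangent line inequality
  have h1 : f k - f kstar ≤ f' k * (k - kstar) := by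
    rcases lt_trichotomy kstar k with h | h | h
    · have := hconv.slope_le_of_hasDerivAt hkstar hk h (hderiv k hk)
      rw [slope_def_field] at this
      have hne : k - kstar > 0 := by linarith
      calc f k - f kstar = (f k - f kstar) / (k - kstar) * (k - kstar) := by
            field_simp
        _ ≤ f' k * (k - kstar) := by
            apply mul_le_mul_of_nonneg_right this hne.le
    · simp [h]
    · have := hconv.le_slope_of_hasDerivAt hk hkstar h (hderiv k hk)
      rw [slope_def_field] at this
      have hne : kstar - k > 0 := by linarith
      have := mul_le_mul_of_nonneg_right this hne.le
      rw [div_mul_cancel₀] at this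
      · nlinarith
      · positivity
  have h0 : (0:ℝ) ≤ f k - f kstar := by linarith [hmin k hk]
  have hGk := hbound k hk
  rcases lt_trichotomy (f' k) 0 with ha | ha | ha
  · rw [Real.sign_of_neg ha]
    have hd : k - kstar ≤ 0 := by nlinarith
    have : f' k * (k - kstar) ≤ G * (-(k - kstar)) := by
      have h2 : -G ≤ f' k := (abs_le.mp hGk).1
      nlinarith
    linarith
  · rw [ha, Real.sign_zero]
    simp only [zero_mul, mul_zero]
    linarith [h1, ha ▸ h1]
  · rw [Real.sign_of_pos ha]
    have hd : 0 ≤ k - kstar := by nlinarith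
    have h2 : f' k ≤ G := (abs_le.mp hGk).2
    nlinarith
end

section
/- Expected regret bound with noisy sign estimates: under the setup of Theorem 1 but where at each round m the algorithm uses a random sign estimate ŝ_m ∈ {-1,0,1} satisfying H_m·E[ŝ_m | k_1,...,k_m] = sign(τ_m'(k_m)) for some 1 <= H_m <= H, the updates k_{m+1} = P(k_m - δ_m ŝ_m) with δ_m = B/sqrt(2m) yield expected regret E[Σ_{m=1}^M (τ_m(k_m) - τ_m(k*))] <= G·H·B·sqrt(2M). -/
/-!
By convexity and minimality of `k*`, each round satisfies
`τ_m(k_m) - τ_m(k*) ≤ τ'_m(k_m) (k_m - k*) ≤ G sign(τ'_m(k_m)) (k_m - k*) = G H_m (k_m - k*) ŝ'_m`,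
where `ŝ'_m = E[ŝ_m | ℱ_m]`; all middle terms are nonnegative, so `H_m` may be replaced by `H`.
As `k_m - k*` is `ℱ_m`-measurable and bounded, `E[(k_m - k*) ŝ'_m] = E[(k_m - k*) ŝ_m]`, which
reduces the theorem to a bound on every path: the projection onto `K` is nonexpansive, so
`(k_m - k*) ŝ_m ≤ ((k_m - k*)² - (k_{m+1} - k*)²) / (2δ_m) + δ_m / 2`, and summing with the
nondecreasing weights `1 / (2δ_m)` gives at most `B² / (2δ_M) + ∑ δ_m / 2 ≤ B √(2M)`.
-/

open MeasureTheory

lemma ConvexOn.sub_le_mul_sub_of_hasDerivAt {s : Set ℝ} {f : ℝ → ℝ} {f' x y : ℝ}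
    (hf : ConvexOn ℝ s f) (hx : x ∈ s) (hy : y ∈ s) (hd : HasDerivAt f f' x) :
    f x - f y ≤ f' * (x - y) := by
  rcases lt_trichotomy x y with h | rfl | h
  · have := hf.le_slope_of_hasDerivAt hx hy h hd
    rw [slope_def_field, le_div_iff₀ (sub_pos.2 h)] at this
    linarith
  · simp
  · have := hf.slope_le_of_hasDerivAt hy hx h hd
    rw [slope_def_field, div_le_iff₀ (sub_pos.2 h)] at this
    linarith

lemma Real.mul_le_mul_sign_mul {g t G : ℝ} (h : 0 ≤ g * t) (hg : |g| ≤ G) :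
    g * t ≤ G * (Real.sign g * t) ∧ 0 ≤ Real.sign g * t := by
  rcases lt_trichotomy g 0 with hg0 | rfl | hg0
  · rw [Real.sign_of_neg hg0, abs_of_neg hg0] at *
    have : t ≤ 0 := nonpos_of_mul_nonneg_right h hg0
    constructor <;> nlinarith
  · simp
  · rw [Real.sign_of_pos hg0, abs_of_pos hg0] at *
    have : 0 ≤ t := nonneg_of_mul_nonneg_right h hg0
    constructor <;> nlinarith

lemma ConvexOn.sub_le_mul_of_mul_eq_sign {s : Set ℝ} {f : ℝ → ℝ} {f' x y G H Hmax e : ℝ}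
    (hf : ConvexOn ℝ s f) (hx : x ∈ s) (hy : y ∈ s) (hd : HasDerivAt f f' x) (hmin : f y ≤ f x)
    (hG : |f'| ≤ G) (hH : 0 < H) (hHmax : H ≤ Hmax) (he : H * e = Real.sign f') :
    f x - f y ≤ G * Hmax * ((x - y) * e) := by
  have hgrad := hf.sub_le_mul_sub_of_hasDerivAt hx hy hd
  obtain ⟨hsign, hsign_nonneg⟩ := Real.mul_le_mul_sign_mul (t := x - y) (by linarith) hG
  have hsign_eq : Real.sign f' * (x - y) = H * ((x - y) * e) := by rw [← he]; ring
  have he_nonneg : 0 ≤ (x - y) * e := nonneg_of_mul_nonneg_right (hsign_eq ▸ hsign_nonneg) hH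
  have hG_nonneg : 0 ≤ G := (abs_nonneg _).trans hG
  calc f x - f y ≤ f' * (x - y) := hgrad
    _ ≤ G * (Real.sign f' * (x - y)) := hsign
    _ = G * H * ((x - y) * e) := by rw [hsign_eq]; ring
    _ ≤ G * Hmax * ((x - y) * e) := by gcongr

lemma abs_max_min_sub_le {α : Type*} [AddCommGroup α] [LinearOrder α] [IsOrderedAddMonoid α]
    {a b y z : α} (hz : z ∈ Set.Icc a b) : |max a (min b y) - z| ≤ |y - z| := by
  have hab := hz.1.trans hz.2
  simpa [← Set.coe_projIcc a b hab, Set.projIcc_of_mem hab hz] using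
    Set.abs_projIcc_sub_projIcc hab (c := y) (d := z)

lemma sub_mul_le_of_projected_step {a b x z s δ : ℝ} (hz : z ∈ Set.Icc a b) (hs : |s| ≤ 1)
    (hδ : 0 < δ) :
    (x - z) * s ≤ ((x - z) ^ 2 - (max a (min b (x - δ * s)) - z) ^ 2) / (2 * δ) + δ / 2 := by
  have hproj := sq_le_sq.2 (abs_max_min_sub_le (y := x - δ * s) hz)
  have hs2 : s ^ 2 ≤ 1 := by simpa using sq_le_sq.2 (hs.trans (abs_one).ge)
  rw [div_add' _ _ _ (by positivity), le_div_iff₀ (by positivity)]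
  nlinarith [mul_le_mul_of_nonneg_left hs2 (sq_nonneg δ)]

lemma sum_inv_sqrt_two_mul_le (M : ℕ) : ∑ m ∈ Finset.Icc 1 M, (√(2 * m))⁻¹ ≤ √(2 * M) := by
  induction M with
  | zero => simp
  | succ n ih =>
    rw [Finset.sum_Icc_succ_top (by omega)]
    set x := √(2 * (n : ℝ))
    set y := √(2 * ((n + 1 : ℕ) : ℝ))
    have hx2 : x ^ 2 = 2 * n := Real.sq_sqrt (by positivity)
    have hy2 : y ^ 2 = 2 * n + 2 := by rw [Real.sq_sqrt (by positivity)]; push_cast; ring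
    have hy : 0 < y := Real.sqrt_pos.2 (by positivity)
    have hxy : x * y + 1 ≤ y ^ 2 := by nlinarith [sq_nonneg (x - y)]
    have hgap : y - (x + y⁻¹) = (y ^ 2 - (x * y + 1)) / y := by field_simp
    have : 0 ≤ y - (x + y⁻¹) := hgap ▸ div_nonneg (by linarith) hy.le
    linarith

lemma sum_Icc_mul_sub_succ_le {c d : ℕ → ℝ} {D : ℝ} (hc : Monotone c) (hc0 : 0 ≤ c 0)
    (hd : ∀ m, d m ≤ D) (n : ℕ) :
    ∑ m ∈ Finset.Icc 1 n, c m * (d m - d (m + 1)) ≤ c n * (D - d (n + 1)) := by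
  induction n with
  | zero => simpa using mul_nonneg hc0 (sub_nonneg.2 (hd 1))
  | succ n ih =>
    rw [Finset.sum_Icc_succ_top (by omega)]
    nlinarith [mul_le_mul_of_nonneg_right (hc n.le_succ) (sub_nonneg.2 (hd (n + 1)))]

lemma integral_mul_condExp_of_stronglyMeasurable {Ω : Type*} {m m₀ : MeasurableSpace Ω}
    {μ : Measure Ω} {f g : Ω → ℝ} {C : ℝ} (hm : m ≤ m₀) [SigmaFinite (μ.trim hm)]
    (hf : StronglyMeasurable[m] f) (hfC : ∀ᵐ ω ∂μ, ‖f ω‖ ≤ C) (hg : Integrable g μ) :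
    ∫ ω, f ω * μ[g | m] ω ∂μ = ∫ ω, f ω * g ω ∂μ := by
  have hfg : Integrable (f * g) μ := hg.bdd_mul (hf.mono hm).aestronglyMeasurable hfC
  calc ∫ ω, f ω * μ[g | m] ω ∂μ = ∫ ω, μ[f * g | m] ω ∂μ :=
        integral_congr_ae (condExp_mul_of_stronglyMeasurable_left hf hfg hg).symm
    _ = ∫ ω, f ω * g ω ∂μ := integral_condExp hm

theorem sum_sub_mul_le_of_projected_steps {a b B z : ℝ} (hB : B = b - a) (hz : z ∈ Set.Icc a b)
    {x s δ : ℕ → ℝ} (M : ℕ) (hδ : ∀ m, δ m = B / √(2 * m)) (hx : ∀ m, x m ∈ Set.Icc a b)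
    (hs : ∀ m, |s m| ≤ 1)
    (hstep : ∀ m, 1 ≤ m → m ≤ M → x (m + 1) = max a (min b (x m - δ m * s m))) :
    ∑ m ∈ Finset.Icc 1 M, (x m - z) * s m ≤ B * √(2 * M) := by
  have hdist : ∀ m, |x m - z| ≤ B := fun m => by
    simpa [Real.dist_eq, hB] using Real.dist_le_of_mem_Icc (hx m) hz
  rcases ((abs_nonneg _).trans (hdist 0)).eq_or_lt with rfl | hBpos
  · simp [fun m => abs_nonpos_iff.1 (hdist m)]
  set c : ℕ → ℝ := fun m => √(2 * m) / (2 * B)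
  have hc : Monotone c := fun i j hij => by dsimp only [c]; gcongr
  have hround : ∀ m ∈ Finset.Icc 1 M, (x m - z) * s m
      ≤ c m * ((x m - z) ^ 2 - (x (m + 1) - z) ^ 2) + δ m / 2 := fun m hm => by
    obtain ⟨h1m, hmM⟩ := Finset.mem_Icc.1 hm
    have hm_pos : (0 : ℝ) < m := by exact_mod_cast h1m
    have hδm : 0 < δ m := by rw [hδ]; positivity
    have hcδ : c m = (2 * δ m)⁻¹ := by simp only [c, hδ]; field_simp
    rw [hcδ, hstep m h1m hmM, ← div_eq_inv_mul]
    exact sub_mul_le_of_projected_step hz (hs m) hδm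
  have hsq : ∀ m, (x m - z) ^ 2 ≤ B ^ 2 := fun m =>
    sq_le_sq' (abs_le.1 (hdist m)).1 (abs_le.1 (hdist m)).2
  have hδsum : ∑ m ∈ Finset.Icc 1 M, δ m / 2 = B / 2 * ∑ m ∈ Finset.Icc 1 M, (√(2 * m))⁻¹ := by
    rw [Finset.mul_sum]; exact Finset.sum_congr rfl fun m _ => by rw [hδ]; ring
  calc ∑ m ∈ Finset.Icc 1 M, (x m - z) * s m
      ≤ ∑ m ∈ Finset.Icc 1 M, (c m * ((x m - z) ^ 2 - (x (m + 1) - z) ^ 2) + δ m / 2) :=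
        Finset.sum_le_sum hround
    _ ≤ c M * (B ^ 2 - (x (M + 1) - z) ^ 2) + B / 2 * √(2 * M) := by
        rw [Finset.sum_add_distrib, hδsum]
        gcongr
        · exact sum_Icc_mul_sub_succ_le hc (by simp [c]) hsq M
        · exact sum_inv_sqrt_two_mul_le M
    _ ≤ c M * B ^ 2 + B / 2 * √(2 * M) := by gcongr; exact sub_le_self _ (sq_nonneg _)
    _ = B * √(2 * M) := by simp only [c]; field_simp; ring

lemma integrable_sum_mul_of_bdd {Ω : Type*} {m₀ : MeasurableSpace Ω} {μ : Measure Ω}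
    {f g : ℕ → Ω → ℝ} {C : ℝ} (hf : ∀ m, AEStronglyMeasurable (f m) μ)
    (hfC : ∀ m ω, ‖f m ω‖ ≤ C) (hg : ∀ m, Integrable (g m) μ) (s : Finset ℕ) :
    Integrable (fun ω => ∑ m ∈ s, f m ω * g m ω) μ :=
  integrable_finsetSum _ fun m _ => (hg m).bdd_mul (hf m) (ae_of_all _ (hfC m))

lemma integral_sum_mul_condExp {Ω : Type*} {m₀ : MeasurableSpace Ω} {μ : Measure Ω}
    [IsFiniteMeasure μ] {ℱ : Filtration ℕ m₀} {f g : ℕ → Ω → ℝ} {C : ℝ}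
    (hf : StronglyAdapted ℱ f) (hfC : ∀ m ω, ‖f m ω‖ ≤ C) (hg : ∀ m, Integrable (g m) μ)
    (s : Finset ℕ) :
    ∫ ω, ∑ m ∈ s, f m ω * μ[g m | ℱ m] ω ∂μ = ∫ ω, ∑ m ∈ s, f m ω * g m ω ∂μ := by
  have hf' : ∀ m, AEStronglyMeasurable (f m) μ :=
    fun m => hf.stronglyMeasurable.aestronglyMeasurable
  rw [integral_finsetSum _ fun m _ => integrable_condExp.bdd_mul (hf' m) (ae_of_all _ (hfC m)),
    integral_finsetSum _ fun m _ => (hg m).bdd_mul (hf' m) (ae_of_all _ (hfC m))]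
  exact Finset.sum_congr rfl fun m _ =>
    integral_mul_condExp_of_stronglyMeasurable (ℱ.le m) (hf m) (ae_of_all _ (hfC m)) (hg m)

theorem expected_regret_bound_noisy_sign_general
    {Ω : Type*} {m0 : MeasurableSpace Ω} (μ : Measure Ω) [IsProbabilityMeasure μ]
    (ℱ : Filtration ℕ m0)
    (kmin kmax : ℝ) (B : ℝ) (hB : B = kmax - kmin)
    (M : ℕ)
    (G : ℝ) (hG : 0 < G)
    (k shat : ℕ → Ω → ℝ) (δ : ℕ → ℝ) (hδ : ∀ m, δ m = B / Real.sqrt (2 * m))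
    (τ τ' : ℕ → ℝ → ℝ)
    (kstar : ℝ) (hkstar : kstar ∈ Set.Icc kmin kmax)
    (hkmem : ∀ m ω, k m ω ∈ Set.Icc kmin kmax)
    (hadapted : Adapted ℱ k)
    (hshat_mem : ∀ m ω, shat m ω ∈ ({-1, 0, 1} : Set ℝ))
    (hshat_int : ∀ m, Integrable (shat m) μ)
    (hupdate : ∀ m, 1 ≤ m → m ≤ M → ∀ ω,
      k (m + 1) ω = max kmin (min kmax (k m ω - δ m * shat m ω)))
    (hconv : ∀ m, ConvexOn ℝ (Set.Icc kmin kmax) (τ m))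
    (hderiv : ∀ m, ∀ x ∈ Set.Icc kmin kmax, HasDerivAt (τ m) (τ' m x) x)
    (hmin : ∀ m, ∀ x ∈ Set.Icc kmin kmax, τ m kstar ≤ τ m x)
    (hbound : ∀ m, ∀ x ∈ Set.Icc kmin kmax, |τ' m x| ≤ G)
    (H : ℕ → ℝ) (Hmax : ℝ) (hH : ∀ m, 1 ≤ H m ∧ H m ≤ Hmax)
    (hcond : ∀ m, (fun ω => H m * (μ[shat m | ℱ m]) ω)
      =ᵐ[μ] fun ω => Real.sign (τ' m (k m ω))) :
    ∫ ω, ∑ m ∈ Finset.Icc 1 M, (τ m (k m ω) - τ m kstar) ∂μ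
      ≤ G * Hmax * B * Real.sqrt (2 * M) := by
  have hdev : StronglyAdapted ℱ fun m ω => k m ω - kstar :=
    (hadapted.sub (adapted_const ℱ kstar)).stronglyAdapted
  have hdev_bdd : ∀ m ω, ‖k m ω - kstar‖ ≤ B := fun m ω => by
    simpa [← Real.dist_eq, hB] using Real.dist_le_of_mem_Icc (hkmem m ω) hkstar
  have hround : ∀ m ∈ Finset.Icc 1 M, ∀ᵐ ω ∂μ, τ m (k m ω) - τ m kstar
      ≤ G * Hmax * ((k m ω - kstar) * μ[shat m | ℱ m] ω) := fun m _ => by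
    filter_upwards [hcond m] with ω hω
    have hk := hkmem m ω
    exact (hconv m).sub_le_mul_of_mul_eq_sign hk hkstar (hderiv m _ hk) (hmin m _ hk)
      (hbound m _ hk) (by linarith [(hH m).1]) (hH m).2 hω
  have hpath : ∀ ω, ∑ m ∈ Finset.Icc 1 M, (k m ω - kstar) * shat m ω ≤ B * √(2 * M) := fun ω =>
    sum_sub_mul_le_of_projected_steps hB hkstar M hδ (hkmem · ω)
      (fun m => by
        obtain h | h | h : shat m ω = -1 ∨ shat m ω = 0 ∨ shat m ω = 1 := hshat_mem m ω
        all_goals simp [h])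
      (fun m h1m hmM => hupdate m h1m hmM ω)
  have hdev_int {g : ℕ → Ω → ℝ} (hg : ∀ m, Integrable (g m) μ) :
      Integrable (fun ω => ∑ m ∈ Finset.Icc 1 M, (k m ω - kstar) * g m ω) μ :=
    integrable_sum_mul_of_bdd (fun m => hdev.stronglyMeasurable.aestronglyMeasurable) hdev_bdd hg _
  have hGH : 0 ≤ G * Hmax := mul_nonneg hG.le (by linarith [(hH 0).1, (hH 0).2])
  calc ∫ ω, ∑ m ∈ Finset.Icc 1 M, (τ m (k m ω) - τ m kstar) ∂μ
      ≤ ∫ ω, G * Hmax * ∑ m ∈ Finset.Icc 1 M, (k m ω - kstar) * μ[shat m | ℱ m] ω ∂μ := by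
        refine integral_mono_of_nonneg ?_ ((hdev_int fun _ => integrable_condExp).const_mul _) ?_
        · exact ae_of_all _ fun ω =>
            Finset.sum_nonneg fun m _ => sub_nonneg.2 (hmin m _ (hkmem m ω))
        · filter_upwards [(Finset.Icc 1 M).eventually_all.2 hround] with ω hω
          rw [Finset.mul_sum]
          exact Finset.sum_le_sum hω
    _ = G * Hmax * ∫ ω, ∑ m ∈ Finset.Icc 1 M, (k m ω - kstar) * shat m ω ∂μ := by
        rw [integral_const_mul, integral_sum_mul_condExp hdev hdev_bdd hshat_int]
    _ ≤ G * Hmax * (B * √(2 * M)) := by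
        gcongr
        simpa using integral_mono (hdev_int hshat_int) (integrable_const _) hpath
    _ = G * Hmax * B * √(2 * M) := by ring

theorem expected_regret_bound_noisy_sign
    {Ω : Type*} {m0 : MeasurableSpace Ω} (μ : Measure Ω) [IsProbabilityMeasure μ]
    (ℱ : Filtration ℕ m0)
    (kmin kmax : ℝ) (hK : kmin ≤ kmax) (B : ℝ) (hB : B = kmax - kmin)
    (M : ℕ) (hM : 0 < M)
    (G : ℝ) (hG : 0 < G)
    (k shat : ℕ → Ω → ℝ) (δ : ℕ → ℝ) (hδ : ∀ m, δ m = B / Real.sqrt (2 * m))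
    (τ τ' : ℕ → ℝ → ℝ)
    (kstar : ℝ) (hkstar : kstar ∈ Set.Icc kmin kmax)
    (hkmem : ∀ m ω, k m ω ∈ Set.Icc kmin kmax)
    (hadapted : Adapted ℱ k)
    (hshat_mem : ∀ m ω, shat m ω ∈ ({-1, 0, 1} : Set ℝ))
    (hshat_int : ∀ m, Integrable (shat m) μ)
    (hupdate : ∀ m, 1 ≤ m → m ≤ M → ∀ ω,
      k (m + 1) ω = max kmin (min kmax (k m ω - δ m * shat m ω)))
    (hconv : ∀ m, ConvexOn ℝ (Set.Icc kmin kmax) (τ m))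
    (hderiv : ∀ m, ∀ x ∈ Set.Icc kmin kmax, HasDerivAt (τ m) (τ' m x) x)
    (hmin : ∀ m, ∀ x ∈ Set.Icc kmin kmax, τ m kstar ≤ τ m x)
    (hbound : ∀ m, ∀ x ∈ Set.Icc kmin kmax, |τ' m x| ≤ G)
    (H : ℕ → ℝ) (Hmax : ℝ) (hH : ∀ m, 1 ≤ H m ∧ H m ≤ Hmax)
    (hcond : ∀ m, (fun ω => H m * (μ[shat m | ℱ m]) ω)
      =ᵐ[μ] fun ω => Real.sign (τ' m (k m ω))) :
    ∫ ω, ∑ m ∈ Finset.Icc 1 M, (τ m (k m ω) - τ m kstar) ∂μ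
      ≤ G * Hmax * B * Real.sqrt (2 * M) :=
  expected_regret_bound_noisy_sign_general μ ℱ kmin kmax B hB M G hG k shat δ hδ τ τ' kstar hkstar
    hkmem hadapted hshat_mem hshat_int hupdate hconv hderiv hmin hbound H Hmax hH hcond
end

section
/- Existence of the per-unit-loss time density (Proposition 1): Suppose each training round with the given sparsity parameter k takes a fixed time γ_k > 0, and the end-of-round loss L is a differentiable, strictly monotonically increasing function of the start-of-round loss L' with dL/dL' > 0. Then there exists a function t̃(k, ·) : (L*, L_0] -> R such that for any round starting at loss L' and ending at loss L = L(L'), one has γ_k = ∫_L^{L'} t̃(k, l) dl. Moreover t̃ satisfies the functional relation t̃(k, L(L')) = t̃(k, L')·(dL'/dL). -/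
/-!
Iterating `L` from `L₀` cuts `(L*, L₀]` into consecutive rounds `(L^[n+1] L₀, L^[n] L₀]`;
they exhaust the interval because a limit of the orbit inside it would be a fixed point of `L`.
Put any density of total mass `γ` on the first round and push it forward round by round
along `L`, i.e. impose `t (L x) * (dL/dx) x = t x`. The change of variables `y = L x` then gives
`∫ t` over `[L x, L L₀]` equal to `∫ t` over `[x, L₀]`, so the integral of `t` over a round
`[L x, x]` does not depend on `x`, and it is `γ` for `x = L₀`.
-/

open Set Function Filter Topology MeasureTheory intervalIntegral

section Orbit

variable {f : ℝ → ℝ} {a b : ℝ}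

theorem strictAnti_iterate_apply (hmaps : MapsTo f (Ioc a b) (Ioc a b))
    (hlt : ∀ x ∈ Ioc a b, f x < x) (hb : b ∈ Ioc a b) : StrictAnti fun n ↦ f^[n] b :=
  strictAnti_nat_of_succ_lt fun n ↦ by
    rw [iterate_succ_apply']
    exact hlt _ (hmaps.iterate n hb)

theorem exists_iterate_lt (hmaps : MapsTo f (Ioc a b) (Ioc a b))
    (hcont : ContinuousOn f (Ioc a b)) (hlt : ∀ x ∈ Ioc a b, f x < x) {x : ℝ}
    (hx : x ∈ Ioc a b) : ∃ n, f^[n] b < x := by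
  by_contra! hxle
  have hb : b ∈ Ioc a b := ⟨hx.1.trans_le hx.2, le_rfl⟩
  have horbit : ∀ n, f^[n] b ∈ Ioc a b := fun n ↦ hmaps.iterate n hb
  have hanti := (strictAnti_iterate_apply hmaps hlt hb).antitone
  set c := ⨅ n, f^[n] b
  have hbdd : BddBelow (range fun n ↦ f^[n] b) := ⟨x, forall_mem_range.2 hxle⟩
  have hlim : Tendsto (fun n ↦ f^[n] b) atTop (𝓝 c) :=
    tendsto_atTop_ciInf hanti hbdd
  have hc : c ∈ Ioc a b := ⟨hx.1.trans_le (le_ciInf hxle), ciInf_le hbdd 0⟩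
  have hlim_within : Tendsto (fun n ↦ f^[n] b) atTop (𝓝[Ioc a b] c) :=
    tendsto_nhdsWithin_iff.2 ⟨hlim, Eventually.of_forall horbit⟩
  have hlim_succ : Tendsto (fun n ↦ f^[n + 1] b) atTop (𝓝 (f c)) := by
    simp only [iterate_succ_apply']
    exact (hcont c hc).tendsto.comp hlim_within
  -- `c` would be a fixed point of `f`
  exact (hlt c hc).ne (tendsto_nhds_unique hlim_succ (hlim.comp (tendsto_add_atTop_nat 1)))

/-- The index `n` of the round `(f^[n+1] b, f^[n] b]` containing `x` (junk `0` if there is none). -/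
noncomputable def roundIndex (f : ℝ → ℝ) (b x : ℝ) : ℕ :=
  sInf {n | f^[n + 1] b < x}

theorem roundIndex_eq_zero {x : ℝ} (hx : f b < x) : roundIndex f b x = 0 :=
  Nat.sInf_eq_zero.2 (Or.inl hx)

theorem roundIndex_eq_of_mem (hanti : Antitone fun n ↦ f^[n] b) {m : ℕ} {x : ℝ}
    (hx : x ∈ Ioc (f^[m + 1] b) (f^[m] b)) : roundIndex f b x = m := by
  refine le_antisymm (Nat.sInf_le hx.1) (le_csInf ⟨m, hx.1⟩ fun k hk ↦ ?_)
  by_contra! hkm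
  exact (hx.2.trans (hanti hkm)).not_gt hk

theorem mem_Ioc_roundIndex {x : ℝ} (hex : ∃ n, f^[n + 1] b < x) (hxb : x ≤ b) :
    x ∈ Ioc (f^[roundIndex f b x + 1] b) (f^[roundIndex f b x] b) := by
  refine ⟨Nat.sInf_mem hex, ?_⟩
  rcases hk : roundIndex f b x with _ | k
  · exact hxb
  · exact not_lt.1 (Nat.notMem_of_lt_sInf (hk ▸ k.lt_succ_self : k < roundIndex f b x))

theorem roundIndex_apply (hmaps : MapsTo f (Ioc a b) (Ioc a b))
    (hcont : ContinuousOn f (Ioc a b)) (hlt : ∀ x ∈ Ioc a b, f x < x)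
    (hmono : StrictMonoOn f (Ioc a b)) {x : ℝ} (hx : x ∈ Ioc a b) :
    roundIndex f b (f x) = roundIndex f b x + 1 := by
  have hb : b ∈ Ioc a b := ⟨hx.1.trans_le hx.2, le_rfl⟩
  have hanti := (strictAnti_iterate_apply hmaps hlt hb).antitone
  obtain ⟨n, hn⟩ := exists_iterate_lt hmaps hcont hlt hx
  have hround := mem_Ioc_roundIndex ⟨n, (hanti n.le_succ).trans_lt hn⟩ hx.2
  apply roundIndex_eq_of_mem hanti
  constructor
  · rw [iterate_succ_apply' f (roundIndex f b x + 1)]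
    exact hmono (hmaps.iterate _ hb) hx hround.1
  · rw [iterate_succ_apply']
    exact hmono.monotoneOn hx (hmaps.iterate _ hb) hround.2

end Orbit

section Density

variable {f : ℝ → ℝ} {a b : ℝ}

/-- The push-forward of the density `ρ` along `f`, given an inverse `g` of `f`. -/
noncomputable def pushDensity (f g ρ : ℝ → ℝ) (y : ℝ) : ℝ :=
  ρ (g y) / deriv f (g y)

/-- On the round `(f^[n+1] b, f^[n] b]`, the seed `ρ` pushed forward `n` times along `f`. -/
noncomputable def roundDensity (f : ℝ → ℝ) (a b : ℝ) (ρ : ℝ → ℝ) (x : ℝ) : ℝ :=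
  (pushDensity f (invFunOn f (Ioc a b)))^[roundIndex f b x] ρ x

theorem roundDensity_of_lt {ρ : ℝ → ℝ} {x : ℝ} (hx : f b < x) :
    roundDensity f a b ρ x = ρ x := by
  rw [roundDensity, roundIndex_eq_zero hx, iterate_zero_apply]

theorem roundDensity_apply_mul_deriv (hmaps : MapsTo f (Ioc a b) (Ioc a b))
    (hcont : ContinuousOn f (Ioc a b)) (hlt : ∀ x ∈ Ioc a b, f x < x)
    (hmono : StrictMonoOn f (Ioc a b)) (ρ : ℝ → ℝ) {x : ℝ} (hx : x ∈ Ioc a b)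
    (hderiv : deriv f x ≠ 0) :
    roundDensity f a b ρ (f x) * deriv f x = roundDensity f a b ρ x := by
  rw [roundDensity, roundDensity, roundIndex_apply hmaps hcont hlt hmono hx,
    iterate_succ_apply', pushDensity, hmono.injOn.leftInvOn_invFunOn hx, div_mul_cancel₀ _ hderiv]

end Density

section ChangeOfVariables

variable {f t : ℝ → ℝ} {p q : ℝ}

theorem monotoneOn_Icc_of_deriv_nonneg (hf : ∀ x ∈ Icc p q, DifferentiableAt ℝ f x)
    (hf' : ∀ x ∈ Icc p q, 0 ≤ deriv f x) : MonotoneOn f (Icc p q) :=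
  monotoneOn_of_deriv_nonneg (convex_Icc p q)
    (fun x hx ↦ (hf x hx).continuousAt.continuousWithinAt)
    (fun x hx ↦ (hf x (interior_subset hx)).differentiableWithinAt)
    (fun x hx ↦ hf' x (interior_subset hx))

theorem intervalIntegrable_image_iff_of_mul_deriv (hpq : p ≤ q)
    (hf : ∀ x ∈ Icc p q, DifferentiableAt ℝ f x) (hf' : ∀ x ∈ Icc p q, 0 ≤ deriv f x)
    (ht : ∀ x ∈ Icc p q, t (f x) * deriv f x = t x) :
    IntervalIntegrable t volume (f p) (f q) ↔ IntervalIntegrable t volume p q := by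
  have hfpq : f p ≤ f q := monotoneOn_Icc_of_deriv_nonneg hf hf'
    (left_mem_Icc.2 hpq) (right_mem_Icc.2 hpq) hpq
  rw [intervalIntegrable_iff_integrableOn_Icc_of_le hpq,
    intervalIntegrable_iff_integrableOn_Icc_of_le hfpq,
    ← integrableOn_Icc_deriv_smul_iff_of_deriv_nonneg
      (fun x hx ↦ (hf x hx).continuousAt.continuousWithinAt)
      (fun x hx ↦ (hf x (Ioo_subset_Icc_self hx)).hasDerivAt)
      (fun x hx ↦ hf' x (Ioo_subset_Icc_self hx)) hpq]
  exact integrableOn_congr_fun (fun x hx ↦ by rw [smul_eq_mul, mul_comm, ht x hx])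
    measurableSet_Icc

theorem integral_image_eq_of_mul_deriv (hpq : p ≤ q)
    (hf : ∀ x ∈ Icc p q, DifferentiableAt ℝ f x) (hf' : ∀ x ∈ Icc p q, 0 ≤ deriv f x)
    (ht : ∀ x ∈ Icc p q, t (f x) * deriv f x = t x) :
    ∫ y in f p..f q, t y = ∫ x in p..q, t x := by
  have hfpq : f p ≤ f q := monotoneOn_Icc_of_deriv_nonneg hf hf'
    (left_mem_Icc.2 hpq) (right_mem_Icc.2 hpq) hpq
  rw [integral_of_le hpq, integral_of_le hfpq, ← integral_Icc_eq_integral_Ioc,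
    ← integral_Icc_eq_integral_Ioc, ← integral_Icc_deriv_smul_of_deriv_nonneg
      (fun x hx ↦ (hf x hx).continuousAt.continuousWithinAt)
      (fun x hx ↦ (hf x (Ioo_subset_Icc_self hx)).hasDerivAt)
      (fun x hx ↦ hf' x (Ioo_subset_Icc_self hx)) hpq]
  exact setIntegral_congr_fun measurableSet_Icc fun x hx ↦ by rw [smul_eq_mul, mul_comm, ht x hx]

end ChangeOfVariables

section RoundIntegral

variable {f t : ℝ → ℝ} {a b : ℝ}

theorem intervalIntegrable_iterate_of_mul_deriv (hmaps : MapsTo f (Ioc a b) (Ioc a b))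
    (hf : ∀ x ∈ Ioc a b, DifferentiableAt ℝ f x) (hf' : ∀ x ∈ Ioc a b, 0 ≤ deriv f x)
    (ht : ∀ x ∈ Ioc a b, t (f x) * deriv f x = t x) (hb : b ∈ Ioc a b)
    (hint : IntervalIntegrable t volume (f b) b) (n : ℕ) :
    IntervalIntegrable t volume (f^[n] b) b := by
  induction n with
  | zero => exact IntervalIntegrable.refl
  | succ n ih =>
    have hsub : Icc (f^[n] b) b ⊆ Ioc a b := ordConnected_Ioc.out (hmaps.iterate n hb) hb
    rw [iterate_succ_apply']
    refine ((intervalIntegrable_image_iff_of_mul_deriv (hmaps.iterate n hb).2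
      (fun x hx ↦ hf x (hsub hx)) (fun x hx ↦ hf' x (hsub hx)) (fun x hx ↦ ht x (hsub hx))).2
      ih).trans hint

theorem integral_apply_self_eq_of_mul_deriv (hmaps : MapsTo f (Ioc a b) (Ioc a b))
    (hlt : ∀ x ∈ Ioc a b, f x < x) (hf : ∀ x ∈ Ioc a b, DifferentiableAt ℝ f x)
    (hf' : ∀ x ∈ Ioc a b, 0 ≤ deriv f x) (ht : ∀ x ∈ Ioc a b, t (f x) * deriv f x = t x)
    (hint : IntervalIntegrable t volume (f b) b) {x : ℝ} (hx : x ∈ Ioc a b) :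
    ∫ y in f x..x, t y = ∫ y in f b..b, t y := by
  have hb : b ∈ Ioc a b := ⟨hx.1.trans_le hx.2, le_rfl⟩
  have hsub : Icc x b ⊆ Ioc a b := ordConnected_Ioc.out hx hb
  obtain ⟨n, hn⟩ := exists_iterate_lt hmaps
    (fun y hy ↦ (hf y hy).continuousAt.continuousWithinAt) hlt hx
  have hxb : IntervalIntegrable t volume x b :=
    (intervalIntegrable_iterate_of_mul_deriv hmaps hf hf' ht hb hint n).mono_set
      (uIcc_subset_uIcc (mem_uIcc_of_le hn.le hx.2) right_mem_uIcc)
  have hfx_fb : IntervalIntegrable t volume (f x) (f b) :=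
    (intervalIntegrable_image_iff_of_mul_deriv hx.2 (fun y hy ↦ hf y (hsub hy))
      (fun y hy ↦ hf' y (hsub hy)) (fun y hy ↦ ht y (hsub hy))).2 hxb
  rw [← sub_eq_zero, integral_interval_sub_interval_comm (hfx_fb.trans (hint.trans hxb.symm))
    hint hfx_fb, integral_image_eq_of_mul_deriv hx.2 (fun y hy ↦ hf y (hsub hy))
    (fun y hy ↦ hf' y (hsub hy)) (fun y hy ↦ ht y (hsub hy)), sub_self]

end RoundIntegral

theorem time_density_exists_general
    (Lstar L0 : ℝ)
    (Lf : ℝ → ℝ) (γ : ℝ)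
    (hLf_mem : ∀ L' ∈ Set.Ioc Lstar L0, Lf L' ∈ Set.Ioc Lstar L0)
    (hLf_lt : ∀ L' ∈ Set.Ioc Lstar L0, Lf L' < L')
    (hLf_diff : ∀ L' ∈ Set.Ioc Lstar L0, DifferentiableAt ℝ Lf L')
    (hLf_deriv_pos : ∀ L' ∈ Set.Ioc Lstar L0, 0 < deriv Lf L') :
    ∃ t : ℝ → ℝ,
      (∀ L' ∈ Set.Ioc Lstar L0, ∫ l in (Lf L')..L', t l = γ) ∧
      (∀ L' ∈ Set.Ioc Lstar L0, t (Lf L') * deriv Lf L' = t L') := by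
  have hcont : ContinuousOn Lf (Ioc Lstar L0) :=
    fun x hx ↦ (hLf_diff x hx).continuousAt.continuousWithinAt
  have hmono : StrictMonoOn Lf (Ioc Lstar L0) := strictMonoOn_of_deriv_pos (convex_Ioc _ _)
    hcont fun x hx ↦ hLf_deriv_pos x (interior_subset hx)
  set t := roundDensity Lf Lstar L0 fun _ ↦ γ / (L0 - Lf L0)
  have ht : ∀ x ∈ Ioc Lstar L0, t (Lf x) * deriv Lf x = t x := fun x hx ↦
    roundDensity_apply_mul_deriv hLf_mem hcont hLf_lt hmono _ hx (hLf_deriv_pos x hx).ne'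
  refine ⟨t, fun x hx ↦ ?_, ht⟩
  have hround : Lf L0 < L0 := hLf_lt L0 ⟨hx.1.trans_le hx.2, le_rfl⟩
  have hseed : EqOn t (fun _ ↦ γ / (L0 - Lf L0)) (Ioo (Lf L0) L0) :=
    fun y hy ↦ roundDensity_of_lt hy.1
  have hint : IntervalIntegrable t volume (Lf L0) L0 :=
    intervalIntegrable_const.congr_uIoo (by rw [uIoo_of_le hround.le]; exact hseed.symm)
  rw [integral_apply_self_eq_of_mul_deriv hLf_mem hLf_lt hLf_diff
      (fun y hy ↦ (hLf_deriv_pos y hy).le) ht hint hx,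
    integral_congr_Ioo_of_le hround.le hseed, intervalIntegral.integral_const, smul_eq_mul,
    mul_div_cancel₀ _ (sub_pos.2 hround).ne']

theorem time_density_exists
    (Lstar L0 : ℝ) (hL : Lstar < L0)
    (Lf : ℝ → ℝ) (γ : ℝ) (hγ : 0 < γ)
    (hLf_mem : ∀ L' ∈ Set.Ioc Lstar L0, Lf L' ∈ Set.Ioc Lstar L0)
    (hLf_lt : ∀ L' ∈ Set.Ioc Lstar L0, Lf L' < L')
    (hLf_diff : ∀ L' ∈ Set.Ioc Lstar L0, DifferentiableAt ℝ Lf L')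
    (hLf_deriv_pos : ∀ L' ∈ Set.Ioc Lstar L0, 0 < deriv Lf L') :
    ∃ t : ℝ → ℝ,
      (∀ L' ∈ Set.Ioc Lstar L0, ∫ l in (Lf L')..L', t l = γ) ∧
      (∀ L' ∈ Set.Ioc Lstar L0, t (Lf L') * deriv Lf L' = t L') :=
  time_density_exists_general Lstar L0 Lf γ hLf_mem hLf_lt hLf_diff hLf_deriv_pos
end
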